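/- arXiv:1207.0977 — 5 statements merged into one kernel-verified Lean document; each statement's English description precedes it below -/
import Mathlib

section
/- Let π ∈ S_n be a permutation moving exactly k points (i.e., with n − k fixed points). Then the centralizer of π in S_n has order at most (n − k)! · k^{k/2} when k ≤ n/2, and consequently |C(π)| ≥ n!/((n−k)!·k^{k/2}) ≥ (n/2)^{k/2}. -/
/-!
A permutation commuting with `π` permutes the `n - k` fixed points of `π`, and on each cycle of
`π` it is determined by the image of a single point of that cycle, an image lying in the support.
As `π` has at most `k / 2` cycles, `|C_{S_n}(π)| ≤ (n - k)! · k ^ (k / 2)`. Orbit–stabilizer turns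
this into the lower bound for the class, and for `2k ≤ n` one has
`(n / 2) ^ (k / 2) · k ^ (k / 2) ≤ (n / 2) ^ k ≤ n! / (n - k)!`.
-/

open Equiv Finset Subgroup Nat

theorem natCast_pow_le_rpow_half {k c : ℕ} (h : 2 * c ≤ k) :
    (k : ℝ) ^ c ≤ (k : ℝ) ^ ((k : ℝ) / 2) := by
  rcases k.eq_zero_or_pos with rfl | hk
  · simp [show c = 0 by omega]
  · rw [← Real.rpow_natCast]
    exact Real.rpow_le_rpow_of_exponent_le (by exact_mod_cast hk) (by
      rw [le_div_iff₀ two_pos]; exact_mod_cast (by omega : c * 2 ≤ k))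

theorem half_rpow_mul_rpow_half_le_descFactorial {n k : ℕ} (h : 2 * k ≤ n) :
    ((n : ℝ) / 2) ^ ((k : ℝ) / 2) * (k : ℝ) ^ ((k : ℝ) / 2) ≤ n.descFactorial k := by
  have hk : (k : ℝ) ≤ n / 2 := by
    rw [le_div_iff₀ two_pos]; exact_mod_cast (by omega : k * 2 ≤ n)
  calc ((n : ℝ) / 2) ^ ((k : ℝ) / 2) * (k : ℝ) ^ ((k : ℝ) / 2)
      = ((n / 2) * k) ^ ((k : ℝ) / 2) := (Real.mul_rpow (by positivity) (by positivity)).symm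
    _ ≤ ((n / 2) ^ 2) ^ ((k : ℝ) / 2) := by gcongr; rw [sq]; gcongr
    _ = (n / 2) ^ k := by
      rw [← Real.rpow_natCast_mul (by positivity)]; push_cast
      rw [mul_div_cancel₀ _ two_ne_zero, Real.rpow_natCast]
    _ ≤ ((n + 1 - k : ℕ) : ℝ) ^ k := by
      gcongr; rw [Nat.cast_sub (by omega)]; push_cast; linarith
    _ ≤ n.descFactorial k := by exact_mod_cast Nat.pow_sub_le_descFactorial n k

namespace Equiv.Perm

variable {α : Type*}

theorem SameCycle.apply_eq_of_commute {π σ τ : Perm α} {x y : α} (hxy : π.SameCycle x y)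
    (hσ : Commute σ π) (hτ : Commute τ π) (h : σ x = τ x) : σ y = τ y := by
  obtain ⟨i, rfl⟩ := hxy
  rw [← mul_apply, ← mul_apply, (hσ.zpow_right i).eq, (hτ.zpow_right i).eq, mul_apply, mul_apply,
    h]

variable [Fintype α] [DecidableEq α]

theorem ext_of_commute {π σ τ : Perm α} (hσ : Commute σ π) (hτ : Commute τ π)
    (hfix : ∀ x ∉ π.support, σ x = τ x)
    (hcycle : ∀ c ∈ π.cycleFactorsFinset, ∃ x ∈ c.support, σ x = τ x) : σ = τ := by
  ext y
  by_cases hy : y ∈ π.support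
  · obtain ⟨x, hx, hστ⟩ := hcycle _ (cycleOf_mem_cycleFactorsFinset_iff.mpr hy)
    exact (mem_support_cycleOf_iff.mp hx).1.symm.apply_eq_of_commute hσ hτ hστ
  · exact hfix y hy

theorem two_mul_card_cycleFactorsFinset_le (π : Perm α) :
    2 * #π.cycleFactorsFinset ≤ #π.support := by
  have hcard : Multiset.card π.cycleType = #π.cycleFactorsFinset := by
    rw [cycleType_def, Multiset.card_map]; rfl
  have h := Multiset.card_nsmul_le_sum (fun _ hm => two_le_of_mem_cycleType (σ := π) hm)
  rw [sum_cycleType, hcard, smul_eq_mul] at h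
  omega

theorem nat_card_centralizer_le (π : Perm α) :
    Nat.card (centralizer {π}) ≤
      (Fintype.card α - #π.support)! * #π.support ^ #π.cycleFactorsFinset := by
  have hcomm (σ : centralizer {π}) : Commute (σ : Perm α) π :=
    mem_centralizer_singleton_iff.mp σ.2
  choose rep hrep using fun c : π.cycleFactorsFinset =>
    (mem_cycleFactorsFinset_iff.mp c.2).1.nonempty_support
  let Φ : centralizer {π} → Perm {x // x ∉ π.support} × (π.cycleFactorsFinset → π.support) :=
    fun σ => ((σ : Perm α).subtypePerm fun x => (mem_support_iff_of_commute (hcomm σ) x).not,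
      fun c => ⟨(σ : Perm α) (rep c), (mem_support_iff_of_commute (hcomm σ) _).mpr
        (mem_cycleFactorsFinset_support_le c.2 (hrep c))⟩)
  have hΦ : Function.Injective Φ := by
    intro σ τ h
    simp only [Φ, Prod.mk.injEq, funext_iff, Subtype.ext_iff, Perm.ext_iff] at h
    refine Subtype.ext (ext_of_commute (hcomm σ) (hcomm τ) (fun x hx => h.1 ⟨x, hx⟩) ?_)
    exact fun c hc => ⟨rep ⟨c, hc⟩, hrep ⟨c, hc⟩, h.2 ⟨c, hc⟩⟩
  calc Nat.card (centralizer {π}) ≤ Nat.card _ := Nat.card_le_card_of_injective Φ hΦ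
    _ = _ := by
      simp only [Nat.card_eq_fintype_card, Fintype.card_prod, Fintype.card_perm,
        Fintype.card_fun, Fintype.card_subtype_compl, Fintype.card_coe]

theorem nat_card_centralizer_le_rpow (π : Perm α) :
    (Nat.card (centralizer {π}) : ℝ) ≤
      (Fintype.card α - #π.support)! * (#π.support : ℝ) ^ ((#π.support : ℝ) / 2) := by
  calc (Nat.card (centralizer {π}) : ℝ)
      ≤ (Fintype.card α - #π.support)! * (#π.support : ℝ) ^ #π.cycleFactorsFinset := by
        exact_mod_cast nat_card_centralizer_le π
    _ ≤ _ := by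
      gcongr
      exact natCast_pow_le_rpow_half (two_mul_card_cycleFactorsFinset_le π)

theorem card_isConj_mul_nat_card_centralizer (π : Perm α) :
    Nat.card {x | IsConj π x} * Nat.card (centralizer {π}) = (Fintype.card α)! := by
  rw [nat_card_centralizer]
  exact card_isConj_mul_eq π

end Equiv.Perm

/-- If `π ∈ S_n` moves exactly `k` points with `k ≤ n/2`, then the centralizer of `π` in
`S_n` has order at most `(n-k)! · k^{k/2}`, and consequently the conjugacy class satisfies
`|C(π)| ≥ n!/((n-k)!·k^{k/2}) ≥ (n/2)^{k/2}`. -/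
theorem centralizer_bound_symmetric_group {n : ℕ} (π : Equiv.Perm (Fin n))
    (k : ℕ) (hk : k = π.support.card) (hk2 : 2 * k ≤ n) :
    (Nat.card (Subgroup.centralizer {π} : Subgroup (Equiv.Perm (Fin n))) : ℝ) ≤
      (Nat.factorial (n - k) : ℝ) * (k : ℝ) ^ ((k : ℝ) / 2) ∧
    (Nat.factorial n : ℝ) / ((Nat.factorial (n - k) : ℝ) * (k : ℝ) ^ ((k : ℝ) / 2)) ≤
      (Nat.card {x : Equiv.Perm (Fin n) | IsConj π x} : ℝ) ∧
    ((n : ℝ) / 2) ^ ((k : ℝ) / 2) ≤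
      (Nat.card {x : Equiv.Perm (Fin n) | IsConj π x} : ℝ) := by
  have hcentralizer := π.nat_card_centralizer_le_rpow
  rw [Fintype.card_fin, ← hk] at hcentralizer
  have hbound_pos : 0 < ((n - k)! * (k : ℝ) ^ ((k : ℝ) / 2)) := by
    obtain rfl | h := k.eq_zero_or_pos
    · simp [Nat.factorial_pos]
    · positivity
  have hcentralizer_pos : (0 : ℝ) < Nat.card (centralizer {π}) := by exact_mod_cast Nat.card_pos
  have hclass : (Nat.card {x | IsConj π x} : ℝ) = n ! / Nat.card (centralizer {π}) := by
    rw [eq_div_iff hcentralizer_pos.ne']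
    exact_mod_cast π.card_isConj_mul_nat_card_centralizer.trans (by rw [Fintype.card_fin])
  have hclass_ge :
      (n ! : ℝ) / ((n - k)! * (k : ℝ) ^ ((k : ℝ) / 2)) ≤ Nat.card {x | IsConj π x} := by
    rw [hclass]
    exact div_le_div_of_nonneg_left (by positivity) hcentralizer_pos hcentralizer
  refine ⟨hcentralizer, hclass_ge, le_trans ?_ hclass_ge⟩
  rw [le_div_iff₀ hbound_pos, ← Nat.factorial_mul_descFactorial (by omega : k ≤ n)]
  calc ((n : ℝ) / 2) ^ ((k : ℝ) / 2) * ((n - k)! * (k : ℝ) ^ ((k : ℝ) / 2))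
      = (n - k)! * (((n : ℝ) / 2) ^ ((k : ℝ) / 2) * (k : ℝ) ^ ((k : ℝ) / 2)) := by ring
    _ ≤ (n - k)! * n.descFactorial k := by
      gcongr; exact half_rpow_mul_rpow_half_le_descFactorial hk2
    _ = ((n - k)! * n.descFactorial k : ℕ) := by push_cast; rfl
end

section
/- Let V be an n-dimensional vector space over a field F and g ∈ GL(V) with rank(1 − g) ≤ n/2. Then ℓ_r(g) = ℓ_J(g), i.e., rank(1 − g) = min over α ∈ F× of rank(α·1 − g). -/
/-!
For `α ≠ 1` the fixed space `ker (1 - g)` and the `α`-eigenspace `ker (α - g)` meet only in `0`,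
so their dimensions add up to at most `n`. By rank–nullity this reads
`n ≤ rank (1 - g) + rank (α - g)`, and `2 · rank (1 - g) ≤ n` then forces
`rank (1 - g) ≤ rank (α - g)`.
-/

open Module LinearMap

theorem Module.End.ker_smul_id_sub_eq_eigenspace {R M : Type*} [CommRing R] [AddCommGroup M]
    [Module R M] (f : End R M) (a : R) : ker (a • LinearMap.id - f) = f.eigenspace a := by
  ext v
  rw [mem_ker, Module.End.mem_eigenspace_iff, LinearMap.sub_apply, sub_eq_zero, eq_comm]
  rfl

theorem Module.End.disjoint_ker_smul_id_sub {R M : Type*} [CommRing R] [IsDomain R]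
    [AddCommGroup M] [Module R M] [IsTorsionFree R M] (f : End R M) {a b : R} (hab : a ≠ b) :
    Disjoint (ker (a • LinearMap.id - f)) (ker (b • LinearMap.id - f)) := by
  rw [f.ker_smul_id_sub_eq_eigenspace, f.ker_smul_id_sub_eq_eigenspace]
  exact f.disjoint_genEigenspace hab 1 1

theorem LinearMap.finrank_le_finrank_range_add_finrank_range_of_disjoint_ker {K V W W' : Type*}
    [DivisionRing K] [AddCommGroup V] [Module K V] [FiniteDimensional K V]
    [AddCommGroup W] [Module K W] [AddCommGroup W'] [Module K W']
    {f : V →ₗ[K] W} {f' : V →ₗ[K] W'} (h : Disjoint (ker f) (ker f')) :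
    finrank K V ≤ finrank K (range f) + finrank K (range f') := by
  have hker := Submodule.finrank_add_finrank_le_of_disjoint h
  have hf := f.finrank_range_add_finrank_ker
  have hf' := f'.finrank_range_add_finrank_ker
  omega

/-- If `g ∈ GL(V)` with `rank(1 - g) ≤ n/2` (where `n = dim V`), then
`rank(1 - g) = min_{α ∈ F×} rank(α·1 - g)`, i.e. `ℓ_r(g) = ℓ_J(g)`. -/
theorem rank_length_eq_jordan_length {K V : Type*} [Field K] [AddCommGroup V]
    [Module K V] [FiniteDimensional K V]
    (n : ℕ) (hn : n = Module.finrank K V) (g : V ≃ₗ[K] V)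
    (h : 2 * Module.finrank K (LinearMap.range ((LinearMap.id : V →ₗ[K] V) - (g : V →ₗ[K] V))) ≤ n) :
    IsLeast {d : ℕ | ∃ α : Kˣ, d = Module.finrank K
        (LinearMap.range ((α : K) • (LinearMap.id : V →ₗ[K] V) - (g : V →ₗ[K] V)))}
      (Module.finrank K (LinearMap.range ((LinearMap.id : V →ₗ[K] V) - (g : V →ₗ[K] V)))) := by
  refine ⟨⟨1, by rw [Units.val_one, one_smul]⟩, ?_⟩
  rintro _ ⟨α, rfl⟩
  by_cases hα : (α : K) = 1
  · rw [hα, one_smul]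
  have hdisj := Module.End.disjoint_ker_smul_id_sub (g : End K V) (Ne.symm hα)
  rw [one_smul] at hdisj
  have hrank := finrank_le_finrank_range_add_finrank_range_of_disjoint_ker hdisj
  omega
end

section
/- Let V be a finite dimensional vector space with non-degenerate bilinear or Hermitian form, W a subspace with radical R = W ∩ W^⊥, and W' a complement of R in W. Then there exists a subspace W'' of V with dim W'' = dim R such that V = (W'' ⊕ W^⊥) ⊕ W' is an orthogonal direct sum decomposition; in particular W' and U := W'' ⊕ W^⊥ are non-degenerate subspaces. -/
/-!
Since `W = R ⊕ W'` with `R ⊥ W`, a vector of `W'` orthogonal to `W'` is orthogonal to all of `W`,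
hence lies in `R ∩ W' = 0`; so `W'` is non-degenerate and `V = W' ⊕ W'^⊥`. As `W' ≤ W`, the
space `W^⊥` sits inside `W'^⊥`, and `W''` is any complement of `W^⊥` in `W'^⊥`. Counting
dimensions, `dim W'' = dim W'^⊥ - dim W^⊥ = dim W - dim W' = dim R`.
-/

open Module

namespace LinearMap.BilinForm

variable {K V : Type*} [Field K] [AddCommGroup V] [Module K V] {B : LinearMap.BilinForm K V}

theorem disjoint_orthogonal_of_sup_radical (hrefl : B.IsRefl) {W W' : Submodule K V}
    (hinf : (W ⊓ B.orthogonal W) ⊓ W' = ⊥) (hsup : (W ⊓ B.orthogonal W) ⊔ W' = W) :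
    Disjoint W' (B.orthogonal W') := by
  rw [Submodule.disjoint_def]
  intro x hxW' hxperp
  have hxW : x ∈ W := hsup ▸ Submodule.mem_sup_right hxW'
  have hx_orth_W : x ∈ B.orthogonal W := by
    intro n hn
    rw [← hsup] at hn
    obtain ⟨r, hr, w, hw, rfl⟩ := Submodule.mem_sup.1 hn
    rw [map_add, LinearMap.add_apply, hrefl _ _ (hr.2 x hxW), hxperp w hw, add_zero]
  have hx : x ∈ (W ⊓ B.orthogonal W) ⊓ W' := ⟨⟨hxW, hx_orth_W⟩, hxW'⟩
  rwa [hinf, Submodule.mem_bot] at hx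

variable [FiniteDimensional K V]

theorem finrank_add_finrank_orthogonal_of_nondegenerate (hB : B.Nondegenerate)
    (W : Submodule K V) : finrank K W + finrank K (B.orthogonal W) = finrank K V := by
  have := finrank_add_finrank_orthogonal' (B := B) W
  rwa [hB.ker_eq_bot, inf_bot_eq, finrank_bot, add_zero] at this

end LinearMap.BilinForm

theorem Submodule.finrank_sup_of_disjoint {K V : Type*} [DivisionRing K] [AddCommGroup V]
    [Module K V] [FiniteDimensional K V] {s t : Submodule K V} (h : Disjoint s t) :
    finrank K ↥(s ⊔ t) = finrank K s + finrank K t := by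
  have := Submodule.finrank_sup_add_finrank_inf_eq s t
  rwa [h.eq_bot, finrank_bot, add_zero] at this

open LinearMap.BilinForm in
theorem orthogonal_complement_of_radical_general {K V : Type*} [Field K] [AddCommGroup V]
    [Module K V] [FiniteDimensional K V]
    (B : LinearMap.BilinForm K V) (hB : B.Nondegenerate) (hrefl : B.IsRefl)
    (W W' : Submodule K V)
    (hinf : (W ⊓ B.orthogonal W) ⊓ W' = ⊥)
    (hsup : (W ⊓ B.orthogonal W) ⊔ W' = W) :
    ∃ W'' : Submodule K V,
      Module.finrank K W'' = Module.finrank K ↥(W ⊓ B.orthogonal W) ∧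
      W'' ⊓ B.orthogonal W = ⊥ ∧
      IsCompl (W'' ⊔ B.orthogonal W) W' ∧
      (∀ u ∈ W'' ⊔ B.orthogonal W, ∀ w ∈ W', B u w = 0) ∧
      (B.restrict W').Nondegenerate ∧
      (B.restrict (W'' ⊔ B.orthogonal W)).Nondegenerate := by
  have hW'_nd : (B.restrict W').Nondegenerate := B.nondegenerate_restrict_of_disjoint_orthogonal
    hrefl (disjoint_orthogonal_of_sup_radical hrefl hinf hsup)
  have hcompl : IsCompl W' (B.orthogonal W') :=
    B.isCompl_orthogonal_of_restrict_nondegenerate hrefl hW'_nd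
  have hW'W : W' ≤ W := le_sup_right.trans hsup.le
  obtain ⟨W'', hdisj, hU⟩ :=
    IsModularLattice.exists_disjoint_and_sup_eq (B.orthogonal_le hW'W)
  rw [sup_comm] at hU
  refine ⟨W'', ?_, hdisj.symm.eq_bot, hU ▸ hcompl.symm, ?_, hW'_nd, ?_⟩
  · have hU_dim := Submodule.finrank_sup_of_disjoint hdisj.symm
    have hW_dim := Submodule.finrank_sup_of_disjoint (disjoint_iff.2 hinf)
    rw [hU] at hU_dim
    rw [hsup] at hW_dim
    have hW_perp := finrank_add_finrank_orthogonal_of_nondegenerate hB W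
    have hW'_perp := finrank_add_finrank_orthogonal_of_nondegenerate hB W'
    omega
  · rw [hU]
    exact fun u hu w hw ↦ hrefl _ _ (hu w hw)
  · rw [hU]
    refine B.nondegenerate_restrict_of_disjoint_orthogonal hrefl ?_
    rw [orthogonal_orthogonal hB hrefl]
    exact hcompl.disjoint.symm

/-- Let `V` be finite dimensional with a non-degenerate reflexive bilinear form `B`,
`W` a subspace with radical `R = W ⊓ W^⊥`, and `W'` a complement of `R` in `W`. Then there
is a subspace `W''` with `dim W'' = dim R` such that `V` is the orthogonal direct sum of
`U := W'' ⊕ W^⊥` and `W'`; in particular `W'` and `U` are non-degenerate. -/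
theorem orthogonal_complement_of_radical {K V : Type*} [Field K] [AddCommGroup V]
    [Module K V] [FiniteDimensional K V]
    (B : LinearMap.BilinForm K V) (hB : B.Nondegenerate) (hrefl : B.IsRefl)
    (W W' : Submodule K V) (hW'W : W' ≤ W)
    (hinf : (W ⊓ B.orthogonal W) ⊓ W' = ⊥)
    (hsup : (W ⊓ B.orthogonal W) ⊔ W' = W) :
    ∃ W'' : Submodule K V,
      Module.finrank K W'' = Module.finrank K ↥(W ⊓ B.orthogonal W) ∧
      W'' ⊓ B.orthogonal W = ⊥ ∧
      IsCompl (W'' ⊔ B.orthogonal W) W' ∧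
      (∀ u ∈ W'' ⊔ B.orthogonal W, ∀ w ∈ W', B u w = 0) ∧
      (B.restrict W').Nondegenerate ∧
      (B.restrict (W'' ⊔ B.orthogonal W)).Nondegenerate :=
  orthogonal_complement_of_radical_general B hB hrefl W W' hinf hsup
end

section
/- For any group G: the set of normal subgroups of G is linearly ordered by inclusion if and only if the set of normal closures of non-identity elements of G is linearly ordered by inclusion. -/
/-- For any group `G`: the set of normal subgroups of `G` is linearly ordered by inclusion
iff the set of normal closures of non-identity elements of `G` is linearly ordered by
inclusion. -/
theorem normal_subgroups_linearly_ordered_iff {G : Type*} [Group G] :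
    (∀ N M : Subgroup G, N.Normal → M.Normal → N ≤ M ∨ M ≤ N) ↔
    (∀ g h : G, g ≠ 1 → h ≠ 1 →
      Subgroup.normalClosure {g} ≤ Subgroup.normalClosure {h} ∨
      Subgroup.normalClosure {h} ≤ Subgroup.normalClosure {g}) := by
  constructor
  · intro H g h _ _
    exact H _ _ (Subgroup.normalClosure_normal) (Subgroup.normalClosure_normal)
  · intro H N M hN hM
    by_cases hNM : N ≤ M
    · exact Or.inl hNM
    · right
      obtain ⟨g, hgN, hgM⟩ := SetLike.not_le_iff_exists.mp hNM
      have hg1 : g ≠ 1 := fun h => hgM (h ▸ M.one_mem)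
      intro h hhM
      by_cases hh1 : h = 1
      · exact hh1 ▸ N.one_mem
      · have hgc : Subgroup.normalClosure {g} ≤ N :=
          Subgroup.normalClosure_le_normal (Set.singleton_subset_iff.mpr hgN)
        have hhc : Subgroup.normalClosure {h} ≤ M :=
          Subgroup.normalClosure_le_normal (Set.singleton_subset_iff.mpr hhM)
        rcases H g h hg1 hh1 with hle | hle
        · exact absurd (hhc (hle (Subgroup.subset_normalClosure rfl))) hgM
        · exact hgc (hle (Subgroup.subset_normalClosure rfl))
end

section
/- Let G be a group in which the set of normal closures of single elements forms a distributive lattice (under intersection and join of normal subgroups). Then the full lattice of normal subgroups of G is distributive, i.e., (L ∨ M) ∧ N = (L ∧ N) ∨ (M ∧ N) for all normal subgroups L, M, N of G. -/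
/-- If in a group `G` the normal closures of single elements satisfy the distributive law
(with meet = intersection and join = join of normal subgroups), then the whole lattice of
normal subgroups of `G` is distributive. -/
theorem distributive_normal_subgroup_lattice {G : Type*} [Group G]
    (hdist : ∀ a b c : G,
      (Subgroup.normalClosure {a} ⊔ Subgroup.normalClosure {b}) ⊓ Subgroup.normalClosure {c}
      = (Subgroup.normalClosure {a} ⊓ Subgroup.normalClosure {c}) ⊔
        (Subgroup.normalClosure {b} ⊓ Subgroup.normalClosure {c})) :
    ∀ L M N : Subgroup G, L.Normal → M.Normal → N.Normal →
      (L ⊔ M) ⊓ N = (L ⊓ N) ⊔ (M ⊓ N) := by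
  intro L M N hL hM hN
  refine le_antisymm ?_ (sup_le (inf_le_inf le_sup_left le_rfl)
    (inf_le_inf le_sup_right le_rfl))
  rintro x ⟨hxLM, hxN⟩
  have : x ∈ (L ⊔ M : Subgroup G) := hxLM
  rw [← SetLike.mem_coe, Subgroup.mul_normal] at this
  obtain ⟨a, ha, b, hb, hab⟩ := this
  have hNa : Subgroup.normalClosure {a} ≤ L :=
    Subgroup.normalClosure_le_normal (by simpa using ha)
  have hNb : Subgroup.normalClosure {b} ≤ M :=
    Subgroup.normalClosure_le_normal (by simpa using hb)
  have hNx : Subgroup.normalClosure {x} ≤ N :=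
    Subgroup.normalClosure_le_normal (by simpa using hxN)
  have hx : x ∈ (Subgroup.normalClosure {a} ⊔ Subgroup.normalClosure {b}) ⊓
      Subgroup.normalClosure {x} := by
    refine ⟨?_, Subgroup.subset_normalClosure rfl⟩
    rw [← hab]
    exact mul_mem (le_sup_left (α := Subgroup G)
        (Subgroup.subset_normalClosure rfl))
      (le_sup_right (α := Subgroup G) (Subgroup.subset_normalClosure rfl))
  rw [hdist] at hx
  exact sup_le_sup (inf_le_inf hNa hNx) (inf_le_inf hNb hNx) hx
end
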